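/- There exists a constant C > 0 such that for all integers r, α, β with 1 ≤ β ≤ α/2 and 2β ≤ α ≤ r, the number of elements of 𝒢_{α,β,r} satisfies |𝒢_{α,β,r}| ≤ 2^{C·r} · Δ(α,β), where Δ(α,β) = α^{2α} · β^{−β} · [ (α−2β)² + 4(α−β) ]^{r−α}. -/

import Mathlib

/-!
The connected components of a graph in `Gfam α β r` partition `[α]` into `β` blocks of size at
least `2`; every edge lies inside a block and, all degrees being even and positive, each block `b`
contains at least `|b|` edges. For a fixed partition, weight an edge inside `b` by
`z_b = 1 + M / (α |b|)`, where `M = (α - 2β)² + 4(α - β)` bounds `∑ |b|²`. Summed over all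
sequences of `r` block-internal edges the weights give `(∑ |b|² z_b)^r ≤ (2M)^r`, while each
admissible sequence weighs at least `∏ z_b^|b| ≥ M^α / (α^α ∏ |b|^|b|)`. Finally
`∑ ∏ |b|^|b| ≤ 12^α α! / β!` over all partitions into `β` blocks (induction on `β`, removing the
block of a fixed vertex), and `n^n ≤ 3^n n!` turns the factorials into `α^α` and `β^(-β)`.
-/

open scoped BigOperators Classical
noncomputable section

namespace FHGraph

/-- The simple graph underlying the edge-labeled multigraph given by the edge sequence `f`. -/
def edgeGraph (α r : ℕ) (f : Fin r → Sym2 (Fin α)) : SimpleGraph (Fin α) where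
  Adj v w := v ≠ w ∧ ∃ p, f p = s(v, w)
  symm := by
    constructor
    rintro v w ⟨hvw, p, hp⟩
    exact ⟨hvw.symm, p, by rw [hp, Sym2.eq_swap]⟩
  loopless := by constructor; rintro v ⟨h, -⟩; exact h rfl

/-- Degree (with multiplicity) of vertex `v` in the multigraph given by `f`. -/
def edgeDeg (α r : ℕ) (f : Fin r → Sym2 (Fin α)) (v : Fin α) : ℕ :=
  (Finset.univ.filter (fun p : Fin r => v ∈ f p)).card

/-- Number of connected components of the multigraph given by `f`. -/
def numCC (α r : ℕ) (f : Fin r → Sym2 (Fin α)) : ℕ :=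
  Nat.card (edgeGraph α r f).ConnectedComponent

/-- `𝒢_{α,β,r}`: edge-labeled loopless multigraphs on `[α]` with `r` labeled edges,
no isolated vertices, all degrees even, and exactly `β` connected components. -/
def Gfam (α β r : ℕ) : Set (Fin r → Sym2 (Fin α)) :=
  {f | (∀ p, ¬ (f p).IsDiag) ∧ (∀ v, ∃ p, v ∈ f p) ∧
    (∀ v, Even (edgeDeg α r f v)) ∧ numCC α r f = β}

/-- `Δ(α,β) = α^{2α} · β^{−β} · [ (α−2β)² + 4(α−β) ]^{r−α}`. -/
def Delta (α β r : ℕ) : ℝ :=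
  (α:ℝ)^(2*α) / (β:ℝ)^β * (((α:ℝ) - 2*β)^2 + 4*((α:ℝ) - β))^(r - α)

open Finset
open scoped Nat

lemma _root_.Finpartition.parts_avoid_of_mem {V : Type*} [DecidableEq V] {s b : Finset V}
    (P : Finpartition s) (hb : b ∈ P.parts) : (P.avoid b).parts = P.parts.erase b := by
  ext c
  rw [Finpartition.mem_avoid, mem_erase]
  constructor
  · rintro ⟨d, hd, hdb, rfl⟩
    have hne : d ≠ b := by rintro rfl; exact hdb le_rfl
    have hdisj : Disjoint d b := P.disjoint hd hb hne
    rw [hdisj.sdiff_eq_left]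
    exact ⟨hne, hd⟩
  · rintro ⟨hcb, hc⟩
    have hdisj : Disjoint c b := P.disjoint hc hb hcb
    refine ⟨c, hc, fun hle => ?_, hdisj.sdiff_eq_left⟩
    obtain ⟨v, hv⟩ := P.nonempty_of_mem_parts hc
    exact disjoint_left.1 hdisj hv (hle hv)

lemma _root_.Finpartition.card_parts_ofSetoid {α : Type*} [Fintype α] [DecidableEq α]
    (S : Setoid α) [DecidableRel S.r] :
    #(Finpartition.ofSetoid S).parts = Nat.card (Quotient S) := by
  let cls : Quotient S → Finset α :=
    Quotient.lift (fun a => {b ∈ (univ : Finset α) | S a b}) fun a a' h => by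
      ext b
      simp only [mem_filter, mem_univ, true_and]
      exact ⟨S.trans (S.symm h), S.trans h⟩
  have hinj : Function.Injective cls := by
    refine Quotient.ind₂ fun a a' h => Quotient.sound ?_
    have : a' ∈ cls ⟦a'⟧ := mem_filter.2 ⟨mem_univ _, S.refl a'⟩
    rw [← h] at this
    exact (mem_filter.1 this).2
  rw [Finpartition.ofSetoid, Finpartition.ofSetSetoid_parts,
    show (fun a => {b ∈ (univ : Finset α) | S a b}) = cls ∘ Quotient.mk S from rfl, ← image_image,
    image_univ_of_surjective Quotient.mk_surjective, card_image_of_injective _ hinj, card_univ,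
    Nat.card_eq_fintype_card]

lemma pow_self_le_three_pow_mul_factorial (n : ℕ) : (n : ℝ) ^ n ≤ 3 ^ n * n ! := by
  have hexp : (n : ℝ) ^ n / n ! ≤ 3 ^ n :=
    calc _ ≤ Real.exp n := Real.pow_div_factorial_le_exp _ (by positivity) _
      _ = Real.exp 1 ^ n := by rw [← Real.exp_nat_mul, mul_one]
      _ ≤ 3 ^ n := pow_le_pow_left₀ (Real.exp_pos 1).le Real.exp_one_lt_three.le _
  exact (div_le_iff₀ (by positivity)).1 hexp

lemma succ_pow_succ_le_six_pow_mul_factorial (m : ℕ) :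
    (m + 1) ^ (m + 1) ≤ 6 ^ (m + 1) * m ! := by
  have h3 : (m + 1) ^ (m + 1) ≤ 3 ^ (m + 1) * (m + 1)! := by
    exact_mod_cast pow_self_le_three_pow_mul_factorial (m + 1)
  calc (m + 1) ^ (m + 1) ≤ 3 ^ (m + 1) * ((m + 1) * m !) := h3
    _ ≤ 3 ^ (m + 1) * (2 ^ (m + 1) * m !) := by
        gcongr; exact Nat.lt_two_pow_self.le
    _ = 6 ^ (m + 1) * m ! := by rw [← mul_assoc, ← mul_pow]; norm_num

lemma sum_six_pow_mul_twelve_pow_le (n : ℕ) :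
    ∑ m ∈ range (n + 1), 6 ^ (m + 1) * 12 ^ (n - m) ≤ 12 ^ (n + 1) := by
  induction n with
  | zero => simp
  | succ n ih =>
    rw [sum_range_succ']
    have hshift : ∑ m ∈ range (n + 1), 6 ^ (m + 1 + 1) * 12 ^ (n + 1 - (m + 1))
        = 6 * ∑ m ∈ range (n + 1), 6 ^ (m + 1) * 12 ^ (n - m) := by
      rw [mul_sum]; refine sum_congr rfl fun m _ => ?_
      rw [Nat.add_sub_add_right]; ring
    rw [hshift]
    calc 6 * ∑ m ∈ range (n + 1), 6 ^ (m + 1) * 12 ^ (n - m) + 6 ^ (0 + 1) * 12 ^ (n + 1 - 0)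
        ≤ 6 * 12 ^ (n + 1) + 6 * 12 ^ (n + 1) := by
          rw [Nat.sub_zero, zero_add, pow_one]; gcongr
      _ = 12 ^ (n + 1 + 1) := by ring

lemma sum_choose_mul_succ_pow_succ_le (n : ℕ) :
    ∑ m ∈ range (n + 1), n.choose m * ((m + 1) ^ (m + 1) * (12 ^ (n - m) * (n - m)!))
      ≤ n ! * 12 ^ (n + 1) := by
  have hterm : ∀ m ∈ range (n + 1),
      n.choose m * ((m + 1) ^ (m + 1) * (12 ^ (n - m) * (n - m)!))
        ≤ n ! * (6 ^ (m + 1) * 12 ^ (n - m)) := by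
    intro m hm
    calc n.choose m * ((m + 1) ^ (m + 1) * (12 ^ (n - m) * (n - m)!))
        ≤ n.choose m * (6 ^ (m + 1) * m ! * (12 ^ (n - m) * (n - m)!)) := by
          gcongr; exact succ_pow_succ_le_six_pow_mul_factorial m
      _ = (n.choose m * m ! * (n - m)!) * (6 ^ (m + 1) * 12 ^ (n - m)) := by ring
      _ = n ! * (6 ^ (m + 1) * 12 ^ (n - m)) := by
          rw [Nat.choose_mul_factorial_mul_factorial (Nat.lt_succ_iff.1 (mem_range.1 hm))]
  calc _ ≤ ∑ m ∈ range (n + 1), n ! * (6 ^ (m + 1) * 12 ^ (n - m)) := sum_le_sum hterm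
    _ ≤ n ! * 12 ^ (n + 1) := by
        rw [← mul_sum]; exact Nat.mul_le_mul_left _ (sum_six_pow_mul_twelve_pow_le n)

lemma card_sym2_le_sq {α : Type*} (b : Finset α) : #b.sym2 ≤ #b ^ 2 := by
  rw [card_sym2, Nat.choose_two_right, Nat.add_sub_cancel]
  exact Nat.div_le_of_le_mul (by nlinarith)

lemma card_filter_mem_le_two {V : Type*} [DecidableEq V] (b : Finset V) (e : Sym2 V) :
    #{v ∈ b | v ∈ e} ≤ 2 := by
  induction e using Sym2.ind with
  | _ x y =>
    refine (card_le_card (t := {x, y}) fun v hv => ?_).trans card_le_two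
    rw [mem_filter, Sym2.mem_iff] at hv
    rcases hv.2 with rfl | rfl <;> simp

section PartitionWeights

variable {V : Type*} [DecidableEq V]

def partitionsWith (s : Finset V) (k : ℕ) : Finset (Finpartition s) :=
  {P | #P.parts = k}

def partWeight {s : Finset V} (P : Finpartition s) : ℕ :=
  ∏ b ∈ P.parts, #b ^ #b

lemma mem_partitionsWith {s : Finset V} {k : ℕ} {P : Finpartition s} :
    P ∈ partitionsWith s k ↔ #P.parts = k := by
  simp [partitionsWith]

lemma sum_partWeight_part_eq_le {s b : Finset V} {v : V} (hvb : v ∈ b) (k : ℕ) :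
    ∑ P ∈ partitionsWith s (k + 1) with P.part v = b, partWeight P
      ≤ #b ^ #b * ∑ Q ∈ partitionsWith (s \ b) k, partWeight Q := by
  set A := {P ∈ partitionsWith s (k + 1) | P.part v = b}
  have hmem : ∀ P ∈ A, b ∈ P.parts ∧ #P.parts = k + 1 := by
    intro P hP
    rw [mem_filter, mem_partitionsWith] at hP
    refine ⟨?_, hP.1⟩
    rw [← hP.2, Finpartition.part_mem, ← P.mem_part_self, hP.2]
    exact hvb
  have hweight : ∀ P ∈ A, partWeight P = #b ^ #b * partWeight (P.avoid b) := by
    intro P hP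
    rw [partWeight, partWeight, P.parts_avoid_of_mem (hmem P hP).1,
      mul_prod_erase _ (fun c => #c ^ #c) (hmem P hP).1]
  have hinj : Set.InjOn (fun P : Finpartition s => P.avoid b) A := by
    intro P hP Q hQ hPQ
    ext1
    rw [← insert_erase (hmem P hP).1, ← insert_erase (hmem Q hQ).1,
      ← P.parts_avoid_of_mem (hmem P hP).1, ← Q.parts_avoid_of_mem (hmem Q hQ).1]
    exact congrArg (insert b ·.parts) hPQ
  have hmaps : A.image (fun P => P.avoid b) ⊆ partitionsWith (s \ b) k := by
    intro Q hQ
    obtain ⟨P, hP, rfl⟩ := mem_image.1 hQ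
    rw [mem_partitionsWith, P.parts_avoid_of_mem (hmem P hP).1,
      card_erase_of_mem (hmem P hP).1, (hmem P hP).2, Nat.add_sub_cancel]
  calc ∑ P ∈ A, partWeight P = #b ^ #b * ∑ P ∈ A, partWeight (P.avoid b) := by
        rw [mul_sum]; exact sum_congr rfl hweight
    _ = #b ^ #b * ∑ Q ∈ A.image (fun P => P.avoid b), partWeight Q := by
        rw [sum_image hinj]
    _ ≤ #b ^ #b * ∑ Q ∈ partitionsWith (s \ b) k, partWeight Q :=
        Nat.mul_le_mul_left _ (sum_le_sum_of_subset hmaps)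

lemma factorial_mul_sum_partWeight_zero_le (s : Finset V) :
    0 ! * ∑ P ∈ partitionsWith s 0, partWeight P ≤ 12 ^ #s * (#s)! := by
  have hsub : (partitionsWith s 0 : Set (Finpartition s)).Subsingleton := by
    intro P hP Q hQ
    rw [mem_coe, mem_partitionsWith, card_eq_zero] at hP hQ
    exact Finpartition.ext (hP.trans hQ.symm)
  have hweight : ∀ P ∈ partitionsWith s 0, partWeight P = 1 := by
    intro P hP
    rw [mem_partitionsWith, card_eq_zero] at hP
    rw [partWeight, hP, prod_empty]
  rw [sum_congr rfl hweight, sum_const, smul_eq_mul, mul_one, Nat.factorial_zero, one_mul]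
  exact (card_le_one_iff_subsingleton_coe.2 hsub.coe_sort).trans
    (Nat.one_le_iff_ne_zero.2 (by positivity))

lemma factorial_mul_sum_part_eq_insert_le {k : ℕ}
    (hk : ∀ t : Finset V, k ! * ∑ P ∈ partitionsWith t k, partWeight P ≤ 12 ^ #t * (#t)!)
    {s c : Finset V} {v : V} {n : ℕ} (hv : v ∈ s) (hn : #s = n + 1) (hcs : c ⊆ s.erase v) :
    k ! * ∑ P ∈ partitionsWith s (k + 1) with (P.part v).erase v = c, partWeight P
      ≤ (#c + 1) ^ (#c + 1) * (12 ^ (n - #c) * (n - #c)!) := by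
  have hvc : v ∉ c := fun h => (mem_erase.1 (hcs h)).1 rfl
  have hcard : #(s \ insert v c) = n - #c := by
    rw [card_sdiff_of_subset (insert_subset hv (hcs.trans (erase_subset v s))),
      card_insert_of_notMem hvc, hn, Nat.add_sub_add_right]
  rw [filter_congr fun P _ => erase_eq_iff_eq_insert (P.mem_part hv) hvc,
    ← card_insert_of_notMem hvc, ← hcard]
  calc k ! * ∑ P ∈ partitionsWith s (k + 1) with P.part v = insert v c, partWeight P
      ≤ k ! * (#(insert v c) ^ #(insert v c) *
          ∑ Q ∈ partitionsWith (s \ insert v c) k, partWeight Q) :=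
        Nat.mul_le_mul_left _ (sum_partWeight_part_eq_le (mem_insert_self v c) k)
    _ = #(insert v c) ^ #(insert v c) *
          (k ! * ∑ Q ∈ partitionsWith (s \ insert v c) k, partWeight Q) := by ring
    _ ≤ _ := Nat.mul_le_mul_left _ (hk _)

lemma factorial_mul_sum_partWeight_le (k : ℕ) (s : Finset V) :
    k ! * ∑ P ∈ partitionsWith s k, partWeight P ≤ 12 ^ #s * (#s)! := by
  induction k generalizing s with
  | zero => exact factorial_mul_sum_partWeight_zero_le s
  | succ k ih =>
    by_cases hks : k + 1 ≤ #s
    swap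
    · have hempty : partitionsWith s (k + 1) = ∅ := by
        refine eq_empty_of_forall_notMem fun P hP => hks ?_
        rw [← mem_partitionsWith.1 hP]
        exact P.card_parts_le_card
      simp [hempty]
    obtain ⟨n, hn⟩ : ∃ n, #s = n + 1 := ⟨#s - 1, by omega⟩
    obtain ⟨v, hv⟩ : s.Nonempty := card_pos.1 (by omega)
    -- classify the partitions by the block of `v`, written as `insert v c`
    have hmaps : ∀ P ∈ partitionsWith s (k + 1), (P.part v).erase v ∈ (s.erase v).powerset :=
      fun P _ => mem_powerset.2 (erase_subset_erase v (P.part_subset v))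
    calc (k + 1)! * ∑ P ∈ partitionsWith s (k + 1), partWeight P
        = (k + 1) * ∑ c ∈ (s.erase v).powerset,
            k ! * ∑ P ∈ partitionsWith s (k + 1) with (P.part v).erase v = c, partWeight P := by
          rw [← mul_sum, sum_fiberwise_of_maps_to hmaps, Nat.factorial_succ, mul_assoc]
      _ ≤ (k + 1) * ∑ c ∈ (s.erase v).powerset,
            (#c + 1) ^ (#c + 1) * (12 ^ (n - #c) * (n - #c)!) :=
          Nat.mul_le_mul_left _ (sum_le_sum fun c hc =>
            factorial_mul_sum_part_eq_insert_le ih hv hn (mem_powerset.1 hc))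
      _ = (k + 1) * ∑ m ∈ range (n + 1),
            n.choose m * ((m + 1) ^ (m + 1) * (12 ^ (n - m) * (n - m)!)) := by
          rw [sum_powerset_apply_card (fun m => (m + 1) ^ (m + 1) * (12 ^ (n - m) * (n - m)!)),
            card_erase_of_mem hv, hn, Nat.add_sub_cancel]
          simp only [smul_eq_mul]
      _ ≤ (n + 1) * (n ! * 12 ^ (n + 1)) :=
          Nat.mul_le_mul (by omega) (sum_choose_mul_succ_pow_succ_le n)
      _ = 12 ^ #s * (#s)! := by rw [hn, Nat.factorial_succ]; ring

lemma sum_card_sq_le {s : Finset V} (P : Finpartition s) (h2 : ∀ b ∈ P.parts, 2 ≤ #b) :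
    ∑ b ∈ P.parts, (#b : ℝ) ^ 2
      ≤ ((#s : ℝ) - 2 * #P.parts) ^ 2 + 4 * ((#s : ℝ) - #P.parts) := by
  set D : ℝ := #s - 2 * #P.parts
  have hsum : ∑ b ∈ P.parts, ((#b : ℝ) - 2) = D := by
    rw [sum_sub_distrib, ← Nat.cast_sum, P.sum_card_parts, sum_const, nsmul_eq_mul]; ring
  have hexcess : ∀ b ∈ P.parts, 0 ≤ (#b : ℝ) - 2 := fun b hb => by
    have := h2 b hb; rw [sub_nonneg]; exact_mod_cast this
  have hle : ∀ b ∈ P.parts, (#b : ℝ) - 2 ≤ D := fun b hb =>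
    hsum ▸ single_le_sum hexcess hb
  calc ∑ b ∈ P.parts, (#b : ℝ) ^ 2
      ≤ ∑ b ∈ P.parts, ((D + 4) * ((#b : ℝ) - 2) + 4) := by
        refine sum_le_sum fun b hb => ?_
        nlinarith [mul_le_mul_of_nonneg_left (hle b hb) (hexcess b hb)]
    _ = (D + 4) * D + 4 * #P.parts := by
        rw [sum_add_distrib, ← mul_sum, hsum, sum_const, nsmul_eq_mul, mul_comm (#P.parts : ℝ)]
    _ = D ^ 2 + 4 * ((#s : ℝ) - #P.parts) := by ring

end PartitionWeights

section EdgeCounting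

variable {V : Type*} [DecidableEq V] {s : Finset V}

lemma eq_of_mem_sym2_of_mem_parts (P : Finpartition s) {b b' : Finset V} {e : Sym2 V}
    (hb : b ∈ P.parts) (hb' : b' ∈ P.parts) (he : e ∈ b.sym2) (he' : e ∈ b'.sym2) : b = b' := by
  induction e using Sym2.ind with
  | _ x y =>
    exact P.eq_of_mem_parts hb hb' (mem_sym2_iff.1 he x (Sym2.mem_mk_left x y))
      (mem_sym2_iff.1 he' x (Sym2.mem_mk_left x y))

variable (P : Finpartition s) (ι : Type*) [Fintype ι] [DecidableEq ι]

def compatibleEdgeSeqs : Finset (ι → Sym2 V) :=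
  {f ∈ Fintype.piFinset fun _ => P.parts.biUnion Finset.sym2 |
    ∀ b ∈ P.parts, #b ≤ #{i | f i ∈ b.sym2}}

variable {P ι}

lemma mem_compatibleEdgeSeqs_iff {f : ι → Sym2 V} :
    f ∈ compatibleEdgeSeqs P ι ↔
      (∀ i, f i ∈ P.parts.biUnion Finset.sym2) ∧ ∀ b ∈ P.parts, #b ≤ #{i | f i ∈ b.sym2} := by
  rw [compatibleEdgeSeqs, mem_filter, Fintype.mem_piFinset]

lemma card_compatibleEdgeSeqs_mul_prod_le (z : Finset V → ℝ) (hz : ∀ b ∈ P.parts, 1 ≤ z b) :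
    #(compatibleEdgeSeqs P ι) * ∏ b ∈ P.parts, z b ^ #b
      ≤ (∑ b ∈ P.parts, #b.sym2 * z b) ^ Fintype.card ι := by
  set W := P.parts.biUnion Finset.sym2
  let ω : Sym2 V → ℝ := fun e => ∏ b ∈ P.parts, if e ∈ b.sym2 then z b else 1
  have hω_nonneg : ∀ e, 0 ≤ ω e := fun e =>
    prod_nonneg fun b hb => by split_ifs <;> linarith [hz b hb]
  have hω_eq : ∀ b ∈ P.parts, ∀ e ∈ b.sym2, ω e = z b := by
    intro b hb e he
    refine (prod_eq_single_of_mem b hb fun b' hb' hne => if_neg fun he' =>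
      hne (eq_of_mem_sym2_of_mem_parts P hb' hb he' he)).trans (if_pos he)
  have hω_prod : ∀ f : ι → Sym2 V, ∏ i, ω (f i) = ∏ b ∈ P.parts, z b ^ #{i | f i ∈ b.sym2} := by
    intro f
    rw [prod_comm]
    refine prod_congr rfl fun b _ => ?_
    rw [prod_ite, prod_const, prod_const_one, mul_one]
  have hdisj : (P.parts : Set (Finset V)).PairwiseDisjoint Finset.sym2 :=
    fun b hb b' hb' hne => disjoint_left.2 fun e he he' =>
      hne (eq_of_mem_sym2_of_mem_parts P hb hb' he he')
  calc #(compatibleEdgeSeqs P ι) * ∏ b ∈ P.parts, z b ^ #b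
      = ∑ f ∈ compatibleEdgeSeqs P ι, ∏ b ∈ P.parts, z b ^ #b := by
        rw [sum_const, nsmul_eq_mul]
    _ ≤ ∑ f ∈ compatibleEdgeSeqs P ι, ∏ i, ω (f i) := by
        refine sum_le_sum fun f hf => ?_
        rw [hω_prod]
        exact prod_le_prod (fun b hb => pow_nonneg (by linarith [hz b hb]) _)
          fun b hb => pow_le_pow_right₀ (hz b hb) ((mem_compatibleEdgeSeqs_iff.1 hf).2 b hb)
    _ ≤ ∑ f ∈ Fintype.piFinset fun _ : ι => W, ∏ i, ω (f i) :=
        sum_le_sum_of_subset_of_nonneg (filter_subset _ _)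
          fun f _ _ => prod_nonneg fun i _ => hω_nonneg _
    _ = (∑ e ∈ W, ω e) ^ Fintype.card ι := by
        rw [← prod_univ_sum, prod_const, card_univ]
    _ = (∑ b ∈ P.parts, #b.sym2 * z b) ^ Fintype.card ι := by
        rw [sum_biUnion hdisj]
        congr 1
        refine sum_congr rfl fun b hb => ?_
        rw [sum_congr rfl (hω_eq b hb), sum_const, nsmul_eq_mul]

lemma sum_card_sym2_mul_le {M : ℝ} (hM : ∑ b ∈ P.parts, (#b : ℝ) ^ 2 ≤ M) :
    ∑ b ∈ P.parts, #b.sym2 * (1 + M / (#s * #b)) ≤ 2 * M := by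
  have hM0 : 0 ≤ M := (sum_nonneg fun b _ => sq_nonneg _).trans hM
  have hterm : ∀ b ∈ P.parts, #b.sym2 * (1 + M / (#s * #b)) ≤ (#b : ℝ) ^ 2 + M / #s * #b := by
    intro b hb
    have hb0 : (#b : ℝ) ≠ 0 := by exact_mod_cast (card_pos.2 (P.nonempty_of_mem_parts hb)).ne'
    have hsym : (#b.sym2 : ℝ) ≤ (#b : ℝ) ^ 2 := by exact_mod_cast card_sym2_le_sq b
    calc #b.sym2 * (1 + M / (#s * #b)) ≤ (#b : ℝ) ^ 2 * (1 + M / (#s * #b)) :=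
          mul_le_mul_of_nonneg_right hsym (by positivity)
      _ = (#b : ℝ) ^ 2 + M / #s * #b := by
          rcases eq_or_ne (#s : ℝ) 0 with hs | hs
          · simp [hs]
          · field_simp
  have hMs : M / #s * #s ≤ M := by
    rcases eq_or_ne (#s : ℝ) 0 with hs | hs
    · rw [hs, mul_zero]; exact hM0
    · rw [div_mul_cancel₀ M hs]
  calc _ ≤ ∑ b ∈ P.parts, ((#b : ℝ) ^ 2 + M / #s * #b) := sum_le_sum hterm
    _ = ∑ b ∈ P.parts, (#b : ℝ) ^ 2 + M / #s * #s := by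
        rw [sum_add_distrib, ← mul_sum, ← Nat.cast_sum, P.sum_card_parts]
    _ ≤ 2 * M := by linarith

lemma pow_le_mul_prod_pow {M : ℝ} (hM : 0 ≤ M) :
    M ^ #s ≤ ((#s : ℝ) ^ #s * partWeight P) * ∏ b ∈ P.parts, (1 + M / (#s * #b)) ^ #b := by
  have hsb : ∀ b ∈ P.parts, 0 < (#s : ℝ) * #b := fun b hb => by
    have hb0 : (0 : ℝ) < #b := by exact_mod_cast card_pos.2 (P.nonempty_of_mem_parts hb)
    have hbs : (#b : ℝ) ≤ #s := by exact_mod_cast card_le_card (P.le hb)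
    nlinarith
  have hprod : ∏ b ∈ P.parts, ((#s : ℝ) * #b) ^ #b = (#s : ℝ) ^ #s * partWeight P := by
    simp only [mul_pow, prod_mul_distrib, prod_pow_eq_pow_sum, P.sum_card_parts, partWeight,
      Nat.cast_prod, Nat.cast_pow]
  rw [← hprod, ← prod_mul_distrib]
  conv_lhs => rw [← P.sum_card_parts, ← prod_pow_eq_pow_sum]
  refine prod_le_prod (fun b _ => pow_nonneg hM _) fun b hb => ?_
  rw [← mul_pow]
  refine pow_le_pow_left₀ hM ?_ _
  calc M = #s * #b * (M / (#s * #b)) := (mul_div_cancel₀ M (hsb b hb).ne').symm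
    _ ≤ #s * #b * (1 + M / (#s * #b)) :=
        mul_le_mul_of_nonneg_left (le_add_of_nonneg_left zero_le_one) (hsb b hb).le

lemma card_compatibleEdgeSeqs_mul_pow_le {M : ℝ} (hM : ∑ b ∈ P.parts, (#b : ℝ) ^ 2 ≤ M) :
    #(compatibleEdgeSeqs P ι) * M ^ #s
      ≤ (2 * M) ^ Fintype.card ι * ((#s : ℝ) ^ #s * partWeight P) := by
  have hM0 : 0 ≤ M := (sum_nonneg fun b _ => sq_nonneg _).trans hM
  have hz : ∀ b ∈ P.parts, 1 ≤ 1 + M / (#s * #b) := fun b _ =>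
    le_add_of_nonneg_right (by positivity)
  calc #(compatibleEdgeSeqs P ι) * M ^ #s
      ≤ #(compatibleEdgeSeqs P ι) *
          (((#s : ℝ) ^ #s * partWeight P) * ∏ b ∈ P.parts, (1 + M / (#s * #b)) ^ #b) :=
        mul_le_mul_of_nonneg_left (pow_le_mul_prod_pow hM0) (by positivity)
    _ = ((#s : ℝ) ^ #s * partWeight P) *
          (#(compatibleEdgeSeqs P ι) * ∏ b ∈ P.parts, (1 + M / (#s * #b)) ^ #b) := by
        ring
    _ ≤ ((#s : ℝ) ^ #s * partWeight P) * (2 * M) ^ Fintype.card ι := by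
        refine mul_le_mul_of_nonneg_left ?_ (by positivity)
        refine (card_compatibleEdgeSeqs_mul_prod_le _ hz).trans
          (pow_le_pow_left₀ ?_ (sum_card_sym2_mul_le hM) _)
        exact sum_nonneg fun b hb => mul_nonneg (Nat.cast_nonneg _) (by linarith [hz b hb])
    _ = (2 * M) ^ Fintype.card ι * ((#s : ℝ) ^ #s * partWeight P) := mul_comm _ _

end EdgeCounting

section Components

variable {α r : ℕ} {f : Fin r → Sym2 (Fin α)}

def componentPartition (α r : ℕ) (f : Fin r → Sym2 (Fin α)) :
    Finpartition (univ : Finset (Fin α)) :=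
  Finpartition.ofSetoid (edgeGraph α r f).reachableSetoid

lemma mem_part_componentPartition {v w : Fin α} :
    w ∈ (componentPartition α r f).part v ↔ (edgeGraph α r f).Reachable v w :=
  Finpartition.mem_part_ofSetoid_iff_rel

lemma card_parts_componentPartition : #(componentPartition α r f).parts = numCC α r f :=
  Finpartition.card_parts_ofSetoid _

lemma edgeGraph_adj_of_mem {p : Fin r} {v w : Fin α} (hvw : v ≠ w) (hv : v ∈ f p)
    (hw : w ∈ f p) : (edgeGraph α r f).Adj v w :=
  ⟨hvw, p, (Sym2.mem_and_mem_iff hvw).1 ⟨hv, hw⟩⟩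

lemma mem_sym2_part_of_mem {p : Fin r} {v : Fin α} (hv : v ∈ f p) :
    f p ∈ ((componentPartition α r f).part v).sym2 := by
  refine mem_sym2_iff.2 fun w hw => mem_part_componentPartition.2 ?_
  rcases eq_or_ne v w with rfl | hvw
  · rfl
  · exact (edgeGraph_adj_of_mem hvw hv hw).reachable

lemma two_le_card_of_mem_parts (hloop : ∀ p, ¬(f p).IsDiag) (hcov : ∀ v, ∃ p, v ∈ f p)
    {b : Finset (Fin α)} (hb : b ∈ (componentPartition α r f).parts) : 2 ≤ #b := by
  obtain ⟨v, hv⟩ := (componentPartition α r f).nonempty_of_mem_parts hb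
  obtain ⟨p, hp⟩ := hcov v
  have hsym := mem_sym2_part_of_mem hp
  rw [(componentPartition α r f).part_eq_of_mem hb hv] at hsym
  exact one_lt_card.2 ⟨_, mem_sym2_iff.1 hsym _ (Sym2.other_mem hp), v, hv,
    Sym2.other_ne (hloop p) hp⟩

lemma card_le_card_filter_mem_sym2 (hcov : ∀ v, ∃ p, v ∈ f p)
    (heven : ∀ v, Even (edgeDeg α r f v)) {b : Finset (Fin α)}
    (hb : b ∈ (componentPartition α r f).parts) : #b ≤ #{p | f p ∈ b.sym2} := by
  have hdeg : ∀ v ∈ b, 2 ≤ edgeDeg α r f v := by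
    intro v _
    obtain ⟨p, hp⟩ := hcov v
    have hpos : 0 < edgeDeg α r f v := card_pos.2 ⟨p, mem_filter.2 ⟨mem_univ p, hp⟩⟩
    obtain ⟨k, hk⟩ := heven v
    omega
  -- an edge meeting a connected component lies inside it
  have hedge : ∀ p, #{v ∈ b | v ∈ f p} ≤ 2 * if f p ∈ b.sym2 then 1 else 0 := by
    intro p
    split_ifs with h
    · exact card_filter_mem_le_two b (f p)
    · rw [mul_zero, Nat.le_zero, card_eq_zero, filter_eq_empty_iff]
      intro v hv hvp
      have := mem_sym2_part_of_mem hvp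
      rw [(componentPartition α r f).part_eq_of_mem hb hv] at this
      exact h this
  have : 2 * #b ≤ 2 * #{p | f p ∈ b.sym2} :=
    calc 2 * #b = ∑ v ∈ b, 2 := by rw [sum_const, smul_eq_mul, mul_comm]
      _ ≤ ∑ v ∈ b, edgeDeg α r f v := sum_le_sum hdeg
      _ = ∑ p, #{v ∈ b | v ∈ f p} :=
          sum_card_bipartiteAbove_eq_sum_card_bipartiteBelow (fun v p => v ∈ f p)
      _ ≤ ∑ p, 2 * if f p ∈ b.sym2 then 1 else 0 := sum_le_sum fun p _ => hedge p
      _ = 2 * #{p | f p ∈ b.sym2} := by rw [← mul_sum, card_filter]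
  omega

lemma mem_compatibleEdgeSeqs {β : ℕ} (hf : f ∈ Gfam α β r) :
    f ∈ compatibleEdgeSeqs (componentPartition α r f) (Fin r) := by
  obtain ⟨-, hcov, heven, -⟩ := hf
  refine mem_compatibleEdgeSeqs_iff.2 ⟨fun p => ?_,
    fun b hb => card_le_card_filter_mem_sym2 hcov heven hb⟩
  exact mem_biUnion.2 ⟨_, (componentPartition α r f).part_mem.2 (mem_univ (f p).out.1),
    mem_sym2_part_of_mem (Sym2.out_fst_mem (f p))⟩

end Components

def sqSumBound (α β : ℕ) : ℝ := ((α : ℝ) - 2 * β) ^ 2 + 4 * ((α : ℝ) - β)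

lemma sqSumBound_pos {α β : ℕ} (hβ : 1 ≤ β) (h2β : 2 * β ≤ α) : 0 < sqSumBound α β := by
  have : (2 * β : ℝ) ≤ α := by exact_mod_cast h2β
  have : (1 : ℝ) ≤ β := by exact_mod_cast hβ
  exact add_pos_of_nonneg_of_pos (sq_nonneg _) (by linarith)

lemma ncard_Gfam_mul_pow_le {α β r : ℕ} (hβ : 1 ≤ β) (h2β : 2 * β ≤ α) :
    ((Gfam α β r).ncard : ℝ) * sqSumBound α β ^ α
      ≤ (2 * sqSumBound α β) ^ r * α ^ α *
          ((∑ P ∈ partitionsWith (univ : Finset (Fin α)) β, partWeight P : ℕ) : ℝ) := by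
  have hM := (sqSumBound_pos hβ h2β).le
  set N := (Gfam α β r).toFinset
  set T := {P ∈ partitionsWith (univ : Finset (Fin α)) β | ∀ b ∈ P.parts, 2 ≤ #b}
  have hmaps : ∀ f ∈ N, componentPartition α r f ∈ T := by
    intro f hf
    obtain ⟨hloop, hcov, -, hcc⟩ := Set.mem_toFinset.1 hf
    rw [mem_filter, mem_partitionsWith, card_parts_componentPartition, hcc]
    exact ⟨rfl, fun b hb => two_le_card_of_mem_parts hloop hcov hb⟩
  have hfiber : ∀ P ∈ T, (#{f ∈ N | componentPartition α r f = P} : ℝ) * sqSumBound α β ^ α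
      ≤ (2 * sqSumBound α β) ^ r * (α ^ α * partWeight P) := by
    intro P hP
    rw [mem_filter, mem_partitionsWith] at hP
    have hsq : ∑ b ∈ P.parts, (#b : ℝ) ^ 2 ≤ sqSumBound α β := by
      simpa [hP.1, sqSumBound] using sum_card_sq_le P hP.2
    have hsub : {f ∈ N | componentPartition α r f = P} ⊆ compatibleEdgeSeqs P (Fin r) := by
      intro f hf
      obtain ⟨hfN, rfl⟩ := mem_filter.1 hf
      exact mem_compatibleEdgeSeqs (Set.mem_toFinset.1 hfN)
    calc (#{f ∈ N | componentPartition α r f = P} : ℝ) * sqSumBound α β ^ α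
        ≤ #(compatibleEdgeSeqs P (Fin r)) * sqSumBound α β ^ α := by gcongr
      _ ≤ (2 * sqSumBound α β) ^ r * (α ^ α * partWeight P) := by
          simpa using card_compatibleEdgeSeqs_mul_pow_le (ι := Fin r) hsq
  calc ((Gfam α β r).ncard : ℝ) * sqSumBound α β ^ α
      = ∑ P ∈ T, (#{f ∈ N | componentPartition α r f = P} : ℝ) * sqSumBound α β ^ α := by
        rw [Set.ncard_eq_toFinset_card', card_eq_sum_card_fiberwise hmaps, Nat.cast_sum, sum_mul]
    _ ≤ ∑ P ∈ T, (2 * sqSumBound α β) ^ r * (α ^ α * partWeight P) := sum_le_sum hfiber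
    _ ≤ ∑ P ∈ partitionsWith univ β, (2 * sqSumBound α β) ^ r * (α ^ α * partWeight P) :=
        sum_le_sum_of_subset_of_nonneg (filter_subset _ _) fun _ _ _ =>
          mul_nonneg (pow_nonneg (by linarith) _) (by positivity)
    _ = (2 * sqSumBound α β) ^ r * α ^ α *
          ((∑ P ∈ partitionsWith (univ : Finset (Fin α)) β, partWeight P : ℕ) : ℝ) := by
        rw [mul_assoc, Nat.cast_sum, mul_sum, mul_sum]

lemma ncard_Gfam_mul_le {α β r : ℕ} (hβ : 1 ≤ β) (h2β : 2 * β ≤ α) (hαr : α ≤ r) :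
    ((Gfam α β r).ncard : ℝ) * sqSumBound α β ^ α * β ^ β
      ≤ 2 ^ (7 * r) * α ^ (2 * α) * sqSumBound α β ^ r := by
  set M := sqSumBound α β
  have hM : 0 < M := sqSumBound_pos hβ h2β
  set S := ∑ P ∈ partitionsWith (univ : Finset (Fin α)) β, partWeight P
  have hcount : ((Gfam α β r).ncard : ℝ) * M ^ α ≤ (2 * M) ^ r * α ^ α * S :=
    ncard_Gfam_mul_pow_le hβ h2β
  have hpartitions : (β ! : ℝ) * S ≤ 12 ^ α * α ^ α := by
    have := factorial_mul_sum_partWeight_le β (univ : Finset (Fin α))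
    rw [card_univ, Fintype.card_fin] at this
    calc (β ! : ℝ) * S ≤ 12 ^ α * α ! := by exact_mod_cast this
      _ ≤ 12 ^ α * α ^ α := by gcongr; exact_mod_cast Nat.factorial_le_pow α
  have hconst : (2 : ℝ) ^ r * 12 ^ α * 3 ^ β ≤ 2 ^ (7 * r) :=
    calc (2 : ℝ) ^ r * 12 ^ α * 3 ^ β ≤ 2 ^ r * 12 ^ r * 3 ^ r := by
          have hβr : β ≤ r := by omega
          gcongr <;> norm_num
      _ ≤ 2 ^ (7 * r) := by rw [← mul_pow, ← mul_pow, pow_mul]; gcongr; norm_num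
  calc ((Gfam α β r).ncard : ℝ) * M ^ α * β ^ β
      ≤ (2 * M) ^ r * α ^ α * S * (3 ^ β * β !) := by
        gcongr; exact pow_self_le_three_pow_mul_factorial β
    _ = 2 ^ r * 3 ^ β * α ^ α * M ^ r * (β ! * S) := by ring
    _ ≤ 2 ^ r * 3 ^ β * α ^ α * M ^ r * (12 ^ α * α ^ α) :=
        mul_le_mul_of_nonneg_left hpartitions (by positivity)
    _ = (2 ^ r * 12 ^ α * 3 ^ β) * α ^ (2 * α) * M ^ r := by ring
    _ ≤ 2 ^ (7 * r) * α ^ (2 * α) * M ^ r := by gcongr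

theorem Gfam_card_upper :
    ∃ C : ℝ, 0 < C ∧ ∀ r α β : ℕ, 1 ≤ β → 2*β ≤ α → α ≤ r →
      ((Gfam α β r).ncard : ℝ) ≤ (2:ℝ)^(C * r) * Delta α β r := by
  refine ⟨7, by norm_num, fun r α β hβ h2β hαr => ?_⟩
  set M := sqSumBound α β
  have hM : 0 < M := sqSumBound_pos hβ h2β
  have hβpos : (0 : ℝ) < β ^ β := by positivity
  have hrpow : (2 : ℝ) ^ ((7 : ℝ) * r) = 2 ^ (7 * r) := by
    rw [← Real.rpow_natCast]; push_cast; rfl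
  have hMr : M ^ r = M ^ (r - α) * M ^ α := by rw [← pow_add, Nat.sub_add_cancel hαr]
  rw [hrpow, show Delta α β r = α ^ (2 * α) / β ^ β * M ^ (r - α) from rfl]
  calc ((Gfam α β r).ncard : ℝ)
      = (Gfam α β r).ncard * M ^ α * β ^ β / (M ^ α * β ^ β) := by field_simp
    _ ≤ 2 ^ (7 * r) * α ^ (2 * α) * M ^ r / (M ^ α * β ^ β) :=
        div_le_div_of_nonneg_right (ncard_Gfam_mul_le hβ h2β hαr) (by positivity)
    _ = 2 ^ (7 * r) * (α ^ (2 * α) / β ^ β * M ^ (r - α)) := by rw [hMr]; field_simp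

end FHGraph
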